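/- Let f(q) ∈ ℚ(q) be a nonzero rational function. Suppose there are infinitely many prime numbers ℓ such that there exists a primitive ℓ-th root of unity ζ_ℓ ∈ ℚ̄ with f(ζ_ℓ) an ℓ-th root of unity. Then f(q) = q^d for some integer d. -/
import Mathlib

open Polynomial

private lemma deg_ge_of_root {ℓ : ℕ} (hp : ℓ.Prime) {ζ : ℂ} (hζ : IsPrimitiveRoot ζ ℓ)
    {A : Polynomial ℚ} (hA0 : A ≠ 0) (hA : Polynomial.aeval ζ A = 0) :
    ℓ - 1 ≤ A.natDegree := by
  have hmin : Polynomial.cyclotomic ℓ ℚ = minpoly ℚ ζ :=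
    Polynomial.cyclotomic_eq_minpoly_rat hζ hp.pos
  have hdvd : minpoly ℚ ζ ∣ A := minpoly.dvd ℚ ζ hA
  have hle := Polynomial.natDegree_le_of_dvd hdvd hA0
  rwa [← hmin, Polynomial.natDegree_cyclotomic, Nat.totient_prime hp] at hle

private lemma ratFunc_eq_X_pow_aux {f : RatFunc ℚ} {m : ℕ}
    (hm : f.num = Polynomial.X ^ m * f.denom) : f = RatFunc.X ^ m := by
  have h1 := f.num_div_denom
  rw [hm, map_mul, map_pow] at h1
  rw [← h1, mul_div_assoc, div_self (RatFunc.algebraMap_ne_zero f.denom_ne_zero), mul_one,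
    RatFunc.algebraMap_X]

private lemma ratFunc_eq_X_pow_aux' {f : RatFunc ℚ} {m : ℕ} (hf : f ≠ 0)
    (hm : f.denom = Polynomial.X ^ m * f.num) : f = RatFunc.X ^ (-(m : ℤ)) := by
  have h1 := f.num_div_denom
  rw [hm, map_mul, map_pow, mul_comm] at h1
  rw [← h1, div_mul_cancel_left₀ (RatFunc.algebraMap_ne_zero (RatFunc.num_ne_zero hf)),
    RatFunc.algebraMap_X, zpow_neg, zpow_natCast]

/-- If `f ∈ ℚ(q)` is a nonzero rational function and for infinitely many primes `ℓ`
there exists a primitive `ℓ`-th root of unity `ζ_ℓ` (in `ℂ`, hence in `ℚ̄`) with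
`f(ζ_ℓ)` defined and an `ℓ`-th root of unity, then `f(q) = q^d` for some integer `d`. -/
theorem ratFunc_eq_pow_of_root_of_unity_values (f : RatFunc ℚ) (hf : f ≠ 0)
    (h : {ℓ : ℕ | ℓ.Prime ∧ ∃ ζ : ℂ, IsPrimitiveRoot ζ ℓ ∧
      Polynomial.aeval ζ f.denom ≠ 0 ∧
      (RatFunc.eval (algebraMap ℚ ℂ) ζ f) ^ ℓ = 1}.Infinite) :
    ∃ d : ℤ, f = RatFunc.X ^ d := by
  set D := max f.num.natDegree f.denom.natDegree with hD
  obtain ⟨ℓ, hℓmem, hℓbig⟩ := h.exists_gt (2 * D + 4)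
  obtain ⟨hp, ζ, hζ, hden, hpow⟩ := hℓmem
  haveI : NeZero ℓ := ⟨hp.ne_zero⟩
  obtain ⟨k, hkℓ, hk⟩ := hζ.eq_pow_of_pow_eq_one hpow
  have hnum0 : f.num ≠ 0 := RatFunc.num_ne_zero hf
  have hden0 : f.denom ≠ 0 := f.denom_ne_zero
  have heval : RatFunc.eval (algebraMap ℚ ℂ) ζ f
      = Polynomial.aeval ζ f.num / Polynomial.aeval ζ f.denom := by
    simp [RatFunc.eval, Polynomial.aeval_def]
  -- the basic evaluation identity:  num(ζ) = ζ^k * denom(ζ)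
  have hkey : Polynomial.aeval ζ f.num = ζ ^ k * Polynomial.aeval ζ f.denom := by
    rw [heval] at hk
    exact (div_eq_iff hden).mp hk.symm
  have hDnum : f.num.natDegree ≤ D := le_max_left _ _
  have hDden : f.denom.natDegree ≤ D := le_max_right _ _
  rcases le_or_gt (2 * k) ℓ with hcase | hcase
  · -- small exponent case : consider num - X^k * denom
    have hAroot : Polynomial.aeval ζ (f.num - Polynomial.X ^ k * f.denom) = 0 := by
      rw [map_sub, map_mul, map_pow, Polynomial.aeval_X, hkey, sub_self]
    have hA0 : f.num - Polynomial.X ^ k * f.denom = 0 := by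
      by_contra hA0
      have h1 := deg_ge_of_root hp hζ hA0 hAroot
      have h2 : (f.num - Polynomial.X ^ k * f.denom).natDegree ≤ k + D := by
        refine le_trans (Polynomial.natDegree_sub_le _ _) (max_le (by omega) ?_)
        refine le_trans (Polynomial.natDegree_mul_le) ?_
        simpa [Polynomial.natDegree_X_pow] using hDden
      omega
    exact ⟨(k : ℤ), by rw [ratFunc_eq_X_pow_aux (sub_eq_zero.mp hA0), zpow_natCast]⟩
  · -- large exponent case : consider X^(ℓ-k) * num - denom
    set m := ℓ - k with hm
    have hmk : m + k = ℓ := by omega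
    have hBroot : Polynomial.aeval ζ (Polynomial.X ^ m * f.num - f.denom) = 0 := by
      rw [map_sub, map_mul, map_pow, Polynomial.aeval_X, hkey, ← mul_assoc, ← pow_add, hmk,
        hζ.pow_eq_one, one_mul, sub_self]
    have hB0 : Polynomial.X ^ m * f.num - f.denom = 0 := by
      by_contra hB0
      have h1 := deg_ge_of_root hp hζ hB0 hBroot
      have h2 : (Polynomial.X ^ m * f.num - f.denom).natDegree ≤ m + D := by
        refine le_trans (Polynomial.natDegree_sub_le _ _) (max_le ?_ (by omega))
        refine le_trans (Polynomial.natDegree_mul_le) ?_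
        simpa [Polynomial.natDegree_X_pow] using hDnum
      omega
    exact ⟨-(m : ℤ), ratFunc_eq_X_pow_aux' hf (sub_eq_zero.mp hB0).symm⟩
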